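/- arXiv:2401.04358 — 2 statements merged into one kernel-verified Lean document; each statement's English description precedes it below -/
import Mathlib

section
/- Let N be a positive even integer. Let Φ be the N×N discrete Fresnel transform matrix with entries Φ_{m,n} = (1/√N)·exp(−i·π/4)·exp(i·π·(m−n)²/N), let Δ be the N×N diagonal matrix with Δ_{n,n} = exp(i·2π·n/N), and let Π be the N×N cyclic-shift permutation matrix with Π_{m,n} = 1 if m ≡ n+1 (mod N) and 0 otherwise. Then Φ·Δ·Φ^H = exp(i·π/N)·Π·Δ, where Φ^H denotes the conjugate transpose of Φ. -/
open Matrix Complex Real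

/-- The N×N discrete Fresnel transform (DFnT) matrix with
Φ_{m,n} = (1/√N)·exp(−i·π/4)·exp(i·π·(m−n)²/N). -/
noncomputable def PhiMat (N : ℕ) : Matrix (Fin N) (Fin N) ℂ :=
  Matrix.of fun m n =>
    (1 / Real.sqrt N : ℂ) * Complex.exp (-(Real.pi / 4) * Complex.I) *
      Complex.exp (Real.pi * Complex.I * (((m : ℕ) : ℤ) - ((n : ℕ) : ℤ)) ^ 2 / N)

/-- The N×N diagonal "Doppler-shift" matrix Δ with Δ_{n,n} = exp(i·2π·n/N). -/
noncomputable def DeltaMat (N : ℕ) : Matrix (Fin N) (Fin N) ℂ :=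
  Matrix.diagonal fun n => Complex.exp (2 * Real.pi * Complex.I * (n : ℕ) / N)

/-- The N×N cyclic-shift permutation matrix Π with Π_{m,n} = 1 if m ≡ n+1 (mod N). -/
def PiMat (N : ℕ) : Matrix (Fin N) (Fin N) ℂ :=
  Matrix.of fun m n => if (m : ℕ) = ((n : ℕ) + 1) % N then 1 else 0

/-!
With `θ(j) = exp(iπj²/N)` one has `Φ_{m,n} = c·θ(m - n)` with `|c|² = 1/N`, and expanding the
squares gives `θ(m - n)·e^{2πin/N}·θ(k - n)⁻¹ = θ(m)·θ(k)⁻¹·ζ^n` with `ζ = e^{2πi(k + 1 - m)/N}`.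
So the `(m, k)` entry of `ΦΔΦᴴ` is `θ(m)θ(k)⁻¹/N` times a geometric sum over an `N`-th root of
unity, which is `N` if `m ≡ k + 1 (mod N)` and `0` otherwise. For even `N`, `θ` is `N`-periodic,
so in the first case `θ(m)θ(k)⁻¹ = θ(k + 1)θ(k)⁻¹ = e^{iπ(2k + 1)/N}`; this covers the wrap-around
entry `m = 0, k = N - 1`.
-/

open Finset

noncomputable def fresnelScale (N : ℕ) : ℂ := (1 / Real.sqrt N : ℂ) * exp (-(π / 4) * I)

noncomputable def fresnelPhase (N : ℕ) (j : ℤ) : ℂ := exp (π * I * j ^ 2 / N)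

lemma PhiMat_apply (N : ℕ) (m n : Fin N) :
    PhiMat N m n = fresnelScale N * fresnelPhase N (((m : ℕ) : ℤ) - ((n : ℕ) : ℤ)) := by
  simp [PhiMat, fresnelScale, fresnelPhase]

lemma fresnelScale_mul_star (N : ℕ) : fresnelScale N * star (fresnelScale N) = 1 / N := by
  rw [fresnelScale, RCLike.star_def, mul_conj', norm_mul,
    show -(π / 4 : ℂ) * I = ((-(π / 4) : ℝ) : ℂ) * I by push_cast; ring, norm_exp_ofReal_mul_I]
  simp only [one_div, norm_inv, Complex.norm_real, Real.norm_eq_abs, mul_one, inv_pow, ofReal_inv]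
  rw [← ofReal_pow, sq_abs, Real.sq_sqrt (Nat.cast_nonneg _), ofReal_natCast]

lemma star_fresnelPhase (N : ℕ) (j : ℤ) : star (fresnelPhase N j) = (fresnelPhase N j)⁻¹ := by
  rw [fresnelPhase, ← Complex.exp_neg, RCLike.star_def, ← Complex.exp_conj]
  congr 1
  simp only [map_div₀, map_mul, conj_ofReal, conj_I, map_pow, map_intCast, map_natCast]
  ring

lemma fresnelPhase_add_mul {N : ℕ} (hN : Even N) (j t : ℤ) :
    fresnelPhase N (j + N * t) = fresnelPhase N j := by
  rcases N.eq_zero_or_pos with rfl | hN0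
  · simp
  obtain ⟨p, rfl⟩ := hN
  have hp : (p : ℂ) ≠ 0 := by exact_mod_cast (show p ≠ 0 by omega)
  rw [fresnelPhase, fresnelPhase, Complex.exp_eq_exp_iff_exists_int]
  refine ⟨j * t + p * t ^ 2, ?_⟩
  push_cast
  field_simp
  ring

lemma fresnelPhase_add_one (N : ℕ) (j : ℤ) :
    fresnelPhase N (j + 1) = fresnelPhase N j * exp (π * I * (2 * j + 1) / N) := by
  rw [fresnelPhase, fresnelPhase, ← Complex.exp_add]
  congr 1
  push_cast
  ring

lemma fresnelPhase_sub_mul_exp_mul_inv (N : ℕ) (m k : ℤ) (n : ℕ) :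
    fresnelPhase N (m - n) * exp (2 * π * I * n / N) * (fresnelPhase N (k - n))⁻¹ =
      fresnelPhase N m * (fresnelPhase N k)⁻¹ *
        exp (2 * π * I * ((k + 1 - m : ℤ) : ℂ) / N) ^ n := by
  simp only [fresnelPhase, ← Complex.exp_neg, ← Complex.exp_nat_mul, ← Complex.exp_add]
  congr 1
  push_cast
  ring

lemma IsPrimitiveRoot.sum_range_zpow_pow {K : Type*} [Field K] {ζ : K} {N : ℕ}
    (hζ : IsPrimitiveRoot ζ N) (j : ℤ) :
    ∑ n ∈ range N, (ζ ^ j) ^ n = if (N : ℤ) ∣ j then (N : K) else 0 := by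
  split_ifs with hdvd
  · simp [(hζ.zpow_eq_one_iff_dvd j).mpr hdvd]
  · have hne : ζ ^ j ≠ 1 := fun h => hdvd ((hζ.zpow_eq_one_iff_dvd j).mp h)
    rw [geom_sum_eq hne, ← zpow_natCast, ← _root_.zpow_mul, mul_comm, _root_.zpow_mul,
      zpow_natCast, hζ.pow_eq_one, _root_.one_zpow, sub_self, zero_div]

lemma sum_range_pow_exp_two_pi_mul_I {N : ℕ} (hN : N ≠ 0) (j : ℤ) :
    ∑ n ∈ range N, exp (2 * π * I * j / N) ^ n = if (N : ℤ) ∣ j then (N : ℂ) else 0 := by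
  rw [← (isPrimitiveRoot_exp N hN).sum_range_zpow_pow j, ← Complex.exp_int_mul]
  ring_nf

lemma PhiMat_mul_DeltaMat_mul_conjTranspose_apply (N : ℕ) (m k : Fin N) :
    (PhiMat N * DeltaMat N * (PhiMat N)ᴴ) m k =
      1 / N * (fresnelPhase N (m : ℕ) * (fresnelPhase N (k : ℕ))⁻¹ *
        ∑ n ∈ range N, exp (2 * π * I * ((((k : ℕ) : ℤ) + 1 - ((m : ℕ) : ℤ) : ℤ) : ℂ) / N) ^ n) := by
  calc (PhiMat N * DeltaMat N * (PhiMat N)ᴴ) m k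
      = ∑ n : Fin N, fresnelScale N * star (fresnelScale N) *
          (fresnelPhase N ((m : ℕ) - (n : ℕ)) * exp (2 * π * I * (n : ℕ) / N) *
            (fresnelPhase N ((k : ℕ) - (n : ℕ)))⁻¹) := by
        rw [mul_apply]
        simp only [DeltaMat, mul_diagonal, conjTranspose_apply, PhiMat_apply, star_mul',
          star_fresnelPhase]
        exact Finset.sum_congr rfl fun n _ => by ring
    _ = _ := by
        simp only [fresnelScale_mul_star, fresnelPhase_sub_mul_exp_mul_inv, ← mul_sum]
        rw [Fin.sum_univ_eq_sum_range
          (fun n => exp (2 * π * I * ((((k : ℕ) : ℤ) + 1 - ((m : ℕ) : ℤ) : ℤ) : ℂ) / N) ^ n)]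

lemma Nat.eq_mod_iff_dvd_sub {N m : ℕ} (hm : m < N) (a : ℕ) : m = a % N ↔ (N : ℤ) ∣ a - m := by
  rw [← Nat.modEq_iff_dvd, Nat.ModEq, Nat.mod_eq_of_lt hm]

lemma fresnelPhase_mul_inv_of_dvd {N : ℕ} (hN : Even N) {m k : ℤ} (h : (N : ℤ) ∣ k + 1 - m) :
    fresnelPhase N m * (fresnelPhase N k)⁻¹ = exp (π * I / N) * exp (2 * π * I * k / N) := by
  obtain ⟨t, ht⟩ := h
  have hk : fresnelPhase N k ≠ 0 := Complex.exp_ne_zero _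
  have hm : m = k + 1 + N * -t := by linarith
  rw [hm, fresnelPhase_add_mul hN, fresnelPhase_add_one, mul_comm, ← mul_assoc,
    inv_mul_cancel₀ hk, one_mul, ← Complex.exp_add]
  congr 1
  ring

theorem stmt2 (N : ℕ) (hN : 0 < N) (hNeven : Even N) :
    PhiMat N * DeltaMat N * (PhiMat N)ᴴ =
      Complex.exp (Real.pi * Complex.I / N) • (PiMat N * DeltaMat N) := by
  have hN0 : (N : ℂ) ≠ 0 := Nat.cast_ne_zero.mpr hN.ne'
  ext m k
  rw [PhiMat_mul_DeltaMat_mul_conjTranspose_apply, sum_range_pow_exp_two_pi_mul_I hN.ne']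
  simp only [Matrix.smul_apply, PiMat, DeltaMat, mul_diagonal, of_apply, smul_eq_mul,
    Nat.eq_mod_iff_dvd_sub m.isLt, Nat.cast_add, Nat.cast_one]
  split_ifs with h
  · rw [fresnelPhase_mul_inv_of_dvd hNeven (by exact_mod_cast h), Int.cast_natCast]
    field_simp
  · simp
end

section
/- Let N be a positive even integer and k any integer. Let Φ be the N×N discrete Fresnel transform matrix with entries Φ_{m,n} = (1/√N)·exp(−i·π/4)·exp(i·π·(m−n)²/N), let Δ be the N×N diagonal matrix with Δ_{n,n} = exp(i·2π·n/N), and let Π be the N×N cyclic-shift permutation matrix with Π_{m,n} = 1 if m ≡ n+1 (mod N) and 0 otherwise. Then Φ·Δ^k·Φ^H = exp(i·π·k²/N)·Π^k·Δ^k, where Δ^k and Π^k denote integer (possibly negative) matrix powers of the invertible matrices Δ and Π, and Φ^H is the conjugate transpose of Φ. -/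
open Matrix Complex Real

/-!
Entrywise, `(Φ Δ^k Φᴴ)ᵢⱼ = N⁻¹ e^{iπ(i² - j²)/N} ∑ₗ e^{2πi(j + k - i)l/N}`, and this geometric sum
vanishes unless `i ≡ j + k (mod N)`, which is exactly the support of `Πᵏ`. On that support
`i² - j² ≡ k² + 2jk (mod 2N)` because `N` is even, so the quadratic phase splits into the scalar
`e^{iπk²/N}` and the diagonal entry `e^{2πikj/N}` of `Δᵏ`.
-/

theorem Matrix.zpow_eq_of_forall_add_one {n R : Type*} [Fintype n] [DecidableEq n] [CommRing R]
    {M : Matrix n n R} (F : ℤ → Matrix n n R) (h0 : F 0 = 1)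
    (hsucc : ∀ k, F (k + 1) = F k * M) (k : ℤ) : M ^ k = F k := by
  have hM : IsUnit M.det := isUnit_det_of_left_inverse (B := F (-1)) (by
    rw [← hsucc, neg_add_cancel, h0])
  induction k using Int.induction_on with
  | zero => rw [zpow_zero, h0]
  | succ k ih => rw [zpow_add_one hM, ih, hsucc]
  | pred k ih =>
    have h := hsucc (-k - 1)
    rw [sub_add_cancel] at h
    rw [zpow_sub_one hM, ih, h, mul_assoc, mul_nonsing_inv _ hM, mul_one]

theorem Complex.sum_exp_two_pi_mul_I_mul_div (N : ℕ) (a : ℤ) :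
    ∑ l : Fin N, exp (2 * π * I * a * (l : ℕ) / N) = if (N : ℤ) ∣ a then (N : ℂ) else 0 := by
  rcases N.eq_zero_or_pos with rfl | hN
  · simp
  have hζ := isPrimitiveRoot_exp N hN.ne'
  have hterm (l : ℕ) : exp (2 * π * I * a * l / N) = (exp (2 * π * I / N) ^ a) ^ l := by
    rw [← exp_int_mul, ← exp_nat_mul]
    ring_nf
  simp_rw [hterm]
  rw [Fin.sum_univ_eq_sum_range (fun l => (exp (2 * π * I / N) ^ a) ^ l)]
  split_ifs with h
  · simp [(hζ.zpow_eq_one_iff_dvd a).mpr h]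
  · have hx : exp (2 * π * I / N) ^ a ≠ 1 := fun hx => h ((hζ.zpow_eq_one_iff_dvd a).mp hx)
    have hxN : (exp (2 * π * I / N) ^ a) ^ N = 1 := by
      rw [← zpow_natCast, ← _root_.zpow_mul, mul_comm a, _root_.zpow_mul, zpow_natCast,
        hζ.pow_eq_one, _root_.one_zpow]
    rw [geom_sum_eq hx, hxN, sub_self, zero_div]

theorem Complex.exp_pi_mul_I_sq_sub_sq_div_of_modEq {N : ℕ} (hN : Even N) {a b k : ℤ}
    (h : a ≡ b + k [ZMOD N]) :
    exp (π * I * (a ^ 2 - b ^ 2) / N) = exp (π * I * k ^ 2 / N) * exp (2 * π * I * k * b / N) := by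
  obtain ⟨u, rfl⟩ := hN
  obtain ⟨s, hs⟩ := Int.modEq_iff_add_fac.mp h.symm
  rcases eq_or_ne u 0 with rfl | hu
  · simp
  have hu' : (u : ℂ) ≠ 0 := by exact_mod_cast hu
  rw [← Complex.exp_add, exp_eq_exp_iff_exists_int]
  refine ⟨(b + k) * s + u * s ^ 2, ?_⟩
  rw [hs]
  push_cast
  field_simp
  ring

theorem DeltaMat_zpow (N : ℕ) (k : ℤ) :
    DeltaMat N ^ k = diagonal fun l : Fin N => exp (2 * π * I * k * (l : ℕ) / N) := by
  refine zpow_eq_of_forall_add_one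
    (fun k : ℤ => diagonal fun l : Fin N => exp (2 * π * I * k * (l : ℕ) / N)) (by simp)
    (fun k => ?_) k
  simp only [DeltaMat, diagonal_mul_diagonal, ← Complex.exp_add]
  congr 1 with l
  congr 1
  push_cast
  ring

theorem PiMat_zpow_apply (N : ℕ) (k : ℤ) (i j : Fin N) :
    (PiMat N ^ k) i j = if ((i : ℕ) : ℤ) ≡ (j : ℕ) + k [ZMOD N] then 1 else 0 := by
  rw [zpow_eq_of_forall_add_one
    (fun k => of fun i j : Fin N => if ((i : ℕ) : ℤ) ≡ (j : ℕ) + k [ZMOD N] then 1 else 0) _ _ k,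
    of_apply]
  · ext i j
    rw [of_apply, one_apply]
    refine if_congr ?_ rfl rfl
    rw [add_zero, Int.natCast_modEq_iff, Nat.ModEq, Nat.mod_eq_of_lt i.isLt,
      Nat.mod_eq_of_lt j.isLt, Fin.val_inj]
  · intro k
    ext i j
    rw [mul_apply, Finset.sum_eq_single ⟨((j : ℕ) + 1) % N, Nat.mod_lt _ j.pos⟩]
    · have hmod : ((((j : ℕ) + 1) % N : ℕ) : ℤ) + k ≡ (j : ℕ) + (k + 1) [ZMOD N] := by
        rw [Int.natCast_mod]
        convert (Int.mod_modEq _ _).add_right k using 1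
        push_cast
        ring
      simp only [of_apply, PiMat, if_true, mul_one]
      exact if_congr ⟨fun h => h.trans hmod.symm, fun h => h.trans hmod⟩ rfl rfl
    · intro l _ hl
      simp only [PiMat, of_apply]
      rw [if_neg fun h => hl (Fin.ext h), mul_zero]
    · simp

theorem PhiMat_mul_star {N : ℕ} (i j l : Fin N) :
    PhiMat N i l * star (PhiMat N j l) =
      (N : ℂ)⁻¹ * exp (π * I * (((i : ℕ) - (l : ℕ) : ℂ) ^ 2 - ((j : ℕ) - (l : ℕ) : ℂ) ^ 2) / N) := by
  have hsqrt : 1 / ((√N : ℝ) : ℂ) * (1 / (√N : ℝ)) = (N : ℂ)⁻¹ := by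
    rw [one_div_mul_one_div, ← ofReal_mul, Real.mul_self_sqrt N.cast_nonneg, ofReal_natCast,
      one_div]
  simp only [PhiMat, of_apply, star_mul', star_div₀, star_one, Complex.star_def, ← exp_conj,
    map_mul, map_neg, map_div₀, conj_I, conj_ofReal, map_pow, map_sub, map_ofNat, map_natCast,
    Int.cast_natCast]
  rw [← hsqrt, show exp (π * I * (((i : ℕ) - (l : ℕ) : ℂ) ^ 2 - ((j : ℕ) - (l : ℕ) : ℂ) ^ 2) / N) =
      exp (-(π / 4) * I) * exp (π * I * ((i : ℕ) - (l : ℕ) : ℂ) ^ 2 / N) *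
        (exp (-(π / 4) * -I) * exp (π * -I * ((j : ℕ) - (l : ℕ) : ℂ) ^ 2 / N)) by
    simp only [← Complex.exp_add]; congr 1; ring]
  ring

theorem sum_PhiMat_mul_exp_mul_star {N : ℕ} (k : ℤ) (i j : Fin N) :
    ∑ l : Fin N, PhiMat N i l * exp (2 * π * I * k * (l : ℕ) / N) * star (PhiMat N j l) =
      exp (π * I * (((i : ℕ) : ℂ) ^ 2 - ((j : ℕ) : ℂ) ^ 2) / N) *
        if ((i : ℕ) : ℤ) ≡ (j : ℕ) + k [ZMOD N] then 1 else 0 := by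
  have hN : (N : ℂ) ≠ 0 := Nat.cast_ne_zero.mpr j.pos.ne'
  have hterm (l : Fin N) :
      PhiMat N i l * exp (2 * π * I * k * (l : ℕ) / N) * star (PhiMat N j l) =
        (N : ℂ)⁻¹ * exp (π * I * (((i : ℕ) : ℂ) ^ 2 - ((j : ℕ) : ℂ) ^ 2) / N) *
          exp (2 * π * I * ((j : ℕ) + k - (i : ℕ) : ℤ) * (l : ℕ) / N) := by
    rw [mul_right_comm, PhiMat_mul_star, mul_assoc (N : ℂ)⁻¹, mul_assoc (N : ℂ)⁻¹,
      ← Complex.exp_add, ← Complex.exp_add]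
    congr 2
    push_cast
    ring
  simp only [hterm, ← Finset.mul_sum, sum_exp_two_pi_mul_I_mul_div, ← Int.modEq_iff_dvd]
  split_ifs
  · field_simp
  · simp

theorem stmt4_general (N : ℕ) (hNeven : Even N) (k : ℤ) :
    PhiMat N * DeltaMat N ^ k * (PhiMat N)ᴴ =
      Complex.exp (Real.pi * Complex.I * (k : ℂ) ^ 2 / N) •
        (PiMat N ^ k * DeltaMat N ^ k) := by
  ext i j
  simp only [DeltaMat_zpow, Matrix.smul_apply, mul_diagonal]
  rw [mul_apply]
  simp only [mul_diagonal, conjTranspose_apply, sum_PhiMat_mul_exp_mul_star, PiMat_zpow_apply]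
  split_ifs with hij
  · have hphase := exp_pi_mul_I_sq_sub_sq_div_of_modEq hNeven hij
    push_cast at hphase
    rw [hphase]
    ring
  · simp

theorem stmt4 (N : ℕ) (hN : 0 < N) (hNeven : Even N) (k : ℤ) :
    PhiMat N * DeltaMat N ^ k * (PhiMat N)ᴴ =
      Complex.exp (Real.pi * Complex.I * (k : ℂ) ^ 2 / N) •
        (PiMat N ^ k * DeltaMat N ^ k) :=
  stmt4_general N hNeven k
end
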